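/- arXiv:1805.04364 — 2 statements merged into one kernel-verified Lean document; each statement's English description precedes it below -/
import Mathlib

section
/- (Theorem 1, realization of a polygonal trajectory.) Let T > 0, V_max > 0, and let p₀, p₁, …, p_{m+1} ∈ ℝ² be points with ∑_{i=0}^{m} ‖p_{i+1} − p_i‖ ≤ V_max·T. Then there exists a map q' : ℝ → ℝ² that is Lipschitz with constant V_max on [0,T], satisfies q'(0) = p₀ and q'(T) = p_{m+1}, and whose image on [0,T] contains every point p_i, 0 ≤ i ≤ m+1 (i.e., for each i there exists t_i ∈ [0,T] with q'(t_i) = p_i). -/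
open scoped BigOperators

noncomputable def seg (a b : EuclideanSpace ℝ (Fin 2)) (s : ℝ) : EuclideanSpace ℝ (Fin 2) :=
  a + ((max 0 (min s ‖b - a‖)) / ‖b - a‖) • (b - a)

lemma seg_nonpos (a b : EuclideanSpace ℝ (Fin 2)) {s : ℝ} (hs : s ≤ 0) : seg a b s = a := by
  have hd : (0:ℝ) ≤ ‖b - a‖ := norm_nonneg _
  have : min s ‖b - a‖ ≤ 0 := le_trans (min_le_left _ _) hs
  simp [seg, max_eq_left this]

lemma seg_end (a b : EuclideanSpace ℝ (Fin 2)) {s : ℝ} (hs : ‖b - a‖ ≤ s) : seg a b s = b := by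
  rcases eq_or_lt_of_le (norm_nonneg (b - a)) with h0 | h0
  · have hba : b - a = 0 := norm_eq_zero.mp h0.symm
    have : b = a := by rwa [sub_eq_zero] at hba
    simp [seg, hba, this]
  · have hmin : min s ‖b - a‖ = ‖b - a‖ := min_eq_right hs
    have hmax : max 0 ‖b - a‖ = ‖b - a‖ := max_eq_right (le_of_lt h0)
    simp [seg, hmin, hmax, div_self (ne_of_gt h0)]

lemma seg_dist (a b : EuclideanSpace ℝ (Fin 2)) (s t : ℝ) :
    dist (seg a b s) (seg a b t) ≤ |s - t| := by
  set d := ‖b - a‖ with hd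
  have hd0 : (0:ℝ) ≤ d := norm_nonneg _
  rcases eq_or_lt_of_le hd0 with h0 | h0
  · have hba : b - a = 0 := by
      have : ‖b - a‖ = 0 := by rw [← hd, ← h0]
      exact norm_eq_zero.mp this
    simp [seg, hba, abs_nonneg]
  · have hdist : dist (seg a b s) (seg a b t)
        = |max 0 (min s d) - max 0 (min t d)| / d * d := by
      rw [seg, seg, dist_eq_norm]
      have : a + (max 0 (min s d) / d) • (b - a) - (a + (max 0 (min t d) / d) • (b - a))
          = ((max 0 (min s d) / d - max 0 (min t d) / d)) • (b - a) := by
        rw [sub_smul]; abel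
      rw [this, norm_smul, ← hd, ← sub_div, Real.norm_eq_abs, abs_div, abs_of_pos h0]
    rw [hdist, div_mul_cancel₀ _ (ne_of_gt h0)]
    have h1 : |max 0 (min s d) - max 0 (min t d)| ≤ |min s d - min t d| := by
      rw [max_comm 0 (min s d), max_comm 0 (min t d)]
      exact abs_max_sub_max_le_abs _ _ _
    have h2 : |min s d - min t d| ≤ |s - t| := by
      refine (abs_min_sub_min_le_max s d t d).trans (max_le le_rfl ?_)
      simp
    exact h1.trans h2

lemma path_exists (p : ℕ → EuclideanSpace ℝ (Fin 2)) (n : ℕ) :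
    ∃ f : ℝ → EuclideanSpace ℝ (Fin 2),
      (∀ s t, dist (f s) (f t) ≤ |s - t|) ∧
      (∀ s ≤ (0:ℝ), f s = p 0) ∧
      (∀ s, (∑ j ∈ Finset.range n, ‖p (j+1) - p j‖) ≤ s → f s = p n) ∧
      (∀ i ≤ n, f (∑ j ∈ Finset.range i, ‖p (j+1) - p j‖) = p i) := by
  induction n with
  | zero =>
      refine ⟨fun _ => p 0, ?_, ?_, ?_, ?_⟩
      · intro s t; simp [abs_nonneg]
      · intro s _; rfl
      · intro s _; rfl
      · intro i hi; interval_cases i; rfl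
  | succ n ih =>
      obtain ⟨f, hlip, h0, hend, hit⟩ := ih
      set Ln : ℝ := ∑ j ∈ Finset.range n, ‖p (j+1) - p j‖ with hLn
      set d : ℝ := ‖p (n+1) - p n‖ with hdd
      have hLn0 : (0:ℝ) ≤ Ln := Finset.sum_nonneg fun _ _ => norm_nonneg _
      have hd0 : (0:ℝ) ≤ d := norm_nonneg _
      have hsum : ∑ j ∈ Finset.range (n+1), ‖p (j+1) - p j‖ = Ln + d := by
        rw [Finset.sum_range_succ]
      have hfLn : f Ln = p n := hit n le_rfl
      refine ⟨fun s => if s ≤ Ln then f s else seg (p n) (p (n+1)) (s - Ln), ?_, ?_, ?_, ?_⟩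
      · intro s t
        by_cases hs : s ≤ Ln <;> by_cases ht : t ≤ Ln <;> simp only [hs, ht, if_pos, if_neg,
          if_true, if_false]
        · exact hlip s t
        · calc dist (f s) (seg (p n) (p (n+1)) (t - Ln))
              ≤ dist (f s) (f Ln) + dist (f Ln) (seg (p n) (p (n+1)) (t - Ln)) :=
                dist_triangle _ _ _
            _ ≤ |s - Ln| + |t - Ln| := by
                refine add_le_add (hlip s Ln) ?_
                rw [hfLn]
                have := seg_dist (p n) (p (n+1)) 0 (t - Ln)
                rwa [seg_nonpos _ _ le_rfl, zero_sub, abs_neg] at this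
            _ ≤ |s - t| := by
                rw [abs_of_nonpos (by linarith), abs_of_nonneg (by linarith),
                  abs_of_nonpos (by linarith)]; linarith
        · calc dist (seg (p n) (p (n+1)) (s - Ln)) (f t)
              ≤ dist (seg (p n) (p (n+1)) (s - Ln)) (f Ln) + dist (f Ln) (f t) :=
                dist_triangle _ _ _
            _ ≤ |s - Ln| + |t - Ln| := by
                refine add_le_add ?_ ?_
                · rw [hfLn]
                  have := seg_dist (p n) (p (n+1)) (s - Ln) 0
                  rwa [seg_nonpos _ _ le_rfl, sub_zero] at this
                · exact (hlip Ln t).trans (le_of_eq (abs_sub_comm Ln t))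
            _ ≤ |s - t| := by
                rw [abs_of_nonneg (by linarith), abs_of_nonpos (by linarith),
                  abs_of_nonneg (by linarith)]; linarith
        · have := seg_dist (p n) (p (n+1)) (s - Ln) (t - Ln)
          rwa [show s - Ln - (t - Ln) = s - t by ring] at this
      · intro s hs
        dsimp only
        rw [if_pos (le_trans hs hLn0)]
        exact h0 s hs
      · intro s hs
        rw [hsum] at hs
        dsimp only
        by_cases hsl : s ≤ Ln
        · rw [if_pos hsl]
          have hde : d = 0 := by linarith
          have hse : s = Ln := by linarith
          have : p (n+1) = p n := by
            have : p (n+1) - p n = 0 := by rwa [← norm_eq_zero, ← hdd]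
            rwa [sub_eq_zero] at this
          rw [hse, hfLn, this]
        · rw [if_neg hsl]
          exact seg_end _ _ (by linarith)
      · intro i hi
        dsimp only
        by_cases hi'' : i ≤ n
        · have hle : (∑ j ∈ Finset.range i, ‖p (j+1) - p j‖) ≤ Ln := by
            rw [hLn]
            exact Finset.sum_le_sum_of_subset_of_nonneg
              (Finset.range_subset_range.mpr hi'') (fun _ _ _ => norm_nonneg _)
          rw [if_pos hle]
          exact hit i hi''
        · have hi' : i = n + 1 := by omega
          subst hi'
          by_cases hle : (∑ j ∈ Finset.range (n+1), ‖p (j+1) - p j‖) ≤ Ln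
          · rw [if_pos hle]
            rw [hsum] at hle
            have hde : d = 0 := by linarith
            have hpe : p (n+1) = p n := by
              have : p (n+1) - p n = 0 := by rwa [← norm_eq_zero, ← hdd]
              rwa [sub_eq_zero] at this
            have hse : ∑ j ∈ Finset.range (n+1), ‖p (j+1) - p j‖ = Ln := by
              rw [hsum, hde, add_zero]
            rw [hse, hfLn, hpe]
          · rw [if_neg hle]
            refine seg_end _ _ ?_
            rw [hsum]; push_neg at hle; rw [hsum] at hle
            linarith

/-- Theorem 1 (realization): any waypoint sequence of total length at most `Vmax * T`
can be realized by a `Vmax`-Lipschitz trajectory on `[0,T]` from the first waypoint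
to the last that passes through every waypoint. -/
theorem trajectory_of_waypoints
    (T Vmax : ℝ) (hT : 0 < T) (hV : 0 < Vmax)
    (m : ℕ) (p : ℕ → EuclideanSpace ℝ (Fin 2))
    (hlen : ∑ i ∈ Finset.range (m + 1), ‖p (i + 1) - p i‖ ≤ Vmax * T) :
    ∃ q' : ℝ → EuclideanSpace ℝ (Fin 2),
      (∀ s ∈ Set.Icc (0:ℝ) T, ∀ t ∈ Set.Icc (0:ℝ) T,
        dist (q' s) (q' t) ≤ Vmax * |s - t|) ∧
      q' 0 = p 0 ∧ q' T = p (m + 1) ∧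
      ∀ i ≤ m + 1, ∃ t ∈ Set.Icc (0:ℝ) T, q' t = p i := by
  obtain ⟨f, hlip, h0, hend, hit⟩ := path_exists p (m + 1)
  refine ⟨fun t => f (Vmax * t), ?_, ?_, ?_, ?_⟩
  · intro s _ t _
    calc dist (f (Vmax * s)) (f (Vmax * t)) ≤ |Vmax * s - Vmax * t| := hlip _ _
      _ = Vmax * |s - t| := by
        rw [← mul_sub, abs_mul, abs_of_pos hV]
  · dsimp only; rw [mul_zero]; exact h0 0 le_rfl
  · exact hend _ hlen
  · intro i hi
    set Li : ℝ := ∑ j ∈ Finset.range i, ‖p (j+1) - p j‖ with hLi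
    have hLi0 : (0:ℝ) ≤ Li := Finset.sum_nonneg fun _ _ => norm_nonneg _
    have hLile : Li ≤ Vmax * T := by
      refine le_trans ?_ hlen
      exact Finset.sum_le_sum_of_subset_of_nonneg
        (Finset.range_subset_range.mpr hi) (fun _ _ _ => norm_nonneg _)
    refine ⟨Li / Vmax, ⟨div_nonneg hLi0 hV.le, ?_⟩, ?_⟩
    · rw [div_le_iff₀ hV]; linarith [hLile]
    · have h : Vmax * (Li / Vmax) = Li := by field_simp
      dsimp only
      rw [h]
      exact hit i hi
end

section
/- (Equivalence of (P1) and (P2).) Sensor nodes are points w_1,…,w_N ∈ ℝ² with communication radii r_n ≥ 0; the coverage area of node n is the closed ball D_n = {x ∈ ℝ² : ‖x − w_n‖ ≤ r_n}. Fix T > 0, V_max > 0 and q₀, q_F ∈ ℝ² with ‖q_F − q₀‖ ≤ V_max·T. For a finite set S ⊆ {1,…,N}, the following are equivalent: (i) there exists q : ℝ → ℝ² Lipschitz with constant V_max on [0,T] with q(0) = q₀, q(T) = q_F such that for every n ∈ S, q(t) ∈ D_n for some t ∈ [0,T]; (ii) writing K = |S|, there exist an enumeration π₁,…,π_K of S and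 points x₁,…,x_K ∈ ℝ² with ‖x_k − w_{π_k}‖ ≤ r_{π_k} for all k, such that, setting x₀ = q₀ and x_{K+1} = q_F, ∑_{k=1}^{K+1} ‖x_k − x_{k−1}‖ ≤ V_max·T. -/
/-!
Ordering the nodes by the time at which a feasible trajectory `q` visits them, the waypoints
`xₖ = q tₖ` form a polygon `q₀ → x₁ → ⋯ → q_F` whose legs are each at most `V_max` times the
elapsed time, and these times telescope to `T`. Conversely, concatenating the segments of a
polygon traversed at unit speed gives a `1`-Lipschitz path through all its vertices; run at speed
`V_max` it reaches `q_F` by time `T` as soon as the polygon has length at most `V_max * T`.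
-/

open Set AffineMap

theorem Fin.sum_succ_sub_castSucc {G : Type*} [AddCommGroup G] :
    ∀ {n : ℕ} (f : Fin (n + 1) → G), ∑ i : Fin n, (f i.succ - f i.castSucc) = f (last n) - f 0
  | 0, f => by simp
  | n + 1, f => by
    have ih := Fin.sum_succ_sub_castSucc (Fin.init f)
    simp only [Fin.init, ← Fin.succ_castSucc] at ih
    rw [Fin.sum_univ_castSucc, ih, Fin.succ_last, Fin.castSucc_zero]
    abel

theorem Monotone.fin_cons {β : Type*} [Preorder β] {n : ℕ} {f : Fin n → β} {a : β}
    (hf : Monotone f) (ha : ∀ i, a ≤ f i) : Monotone (Fin.cons a f : Fin (n + 1) → β) := by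
  intro i j hij
  cases i using Fin.cases with
  | zero => cases j using Fin.cases with
    | zero => exact le_rfl
    | succ j => simpa using ha j
  | succ i => cases j using Fin.cases with
    | zero => exact absurd hij (by simp)
    | succ j => simpa using hf (Fin.succ_le_succ_iff.mp hij)

theorem Monotone.fin_snoc {β : Type*} [Preorder β] {n : ℕ} {f : Fin n → β} {b : β}
    (hf : Monotone f) (hb : ∀ i, f i ≤ b) : Monotone (Fin.snoc f b : Fin (n + 1) → β) := by
  intro i j hij
  cases j using Fin.lastCases with
  | last => cases i using Fin.lastCases with
    | last => exact le_rfl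
    | cast i => simpa using hb i
  | cast j => cases i using Fin.lastCases with
    | last => exact absurd hij (by simp)
    | cast i => simpa using hf (Fin.castSucc_le_castSucc_iff.mp hij)

theorem Finset.exists_injective_monotone_comp {ι β : Type*} [LinearOrder β] (s : Finset ι)
    (f : ι → β) :
    ∃ π : Fin s.card → ι, Function.Injective π ∧ (∀ k, π k ∈ s) ∧ Monotone (f ∘ π) := by
  set e := s.equivFin.symm
  set g : Fin s.card → β := fun k => f (e k)
  exact ⟨fun k => e (Tuple.sort g k),
    Subtype.val_injective.comp (e.injective.comp (Tuple.sort g).injective),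
    fun k => (e _).2, Tuple.monotone_sort g⟩

theorem Finset.exists_eq_of_injective_of_mem {ι : Type*} {s : Finset ι} {π : Fin s.card → ι}
    (hπ : Function.Injective π) (hπs : ∀ k, π k ∈ s) {i : ι} (hi : i ∈ s) : ∃ k, π k = i := by
  obtain ⟨k, -, rfl⟩ := Finset.surj_on_of_inj_on_of_card_le (s := Finset.univ) (fun k _ => π k)
    (fun k _ => hπs k) (fun _ _ _ _ h => hπ h) (by simp) i hi
  exact ⟨k, rfl⟩

section Polygon

variable {α : Type*} [PseudoMetricSpace α]

def polygonLength {n : ℕ} (y : Fin (n + 1) → α) : ℝ :=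
  ∑ i : Fin n, dist (y i.castSucc) (y i.succ)

theorem polygonLength_nonneg {n : ℕ} (y : Fin (n + 1) → α) : 0 ≤ polygonLength y :=
  Finset.sum_nonneg fun _ _ => dist_nonneg

theorem polygonLength_eq_dist_add_tail {n : ℕ} (y : Fin (n + 2) → α) :
    polygonLength y = dist (y 0) (y 1) + polygonLength (Fin.tail y) := by
  simp only [polygonLength, Fin.sum_univ_succ, Fin.tail, Fin.succ_castSucc]
  rfl

theorem LipschitzOnWith.polygonLength_comp_le {K : NNReal} {q : ℝ → α} {A : Set ℝ} (hq : LipschitzOnWith K q A) {n : ℕ} {s : Fin (n + 1) → ℝ}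
    (hs : Monotone s) (hsA : ∀ i, s i ∈ A) :
    polygonLength (q ∘ s) ≤ K * (s (Fin.last n) - s 0) := by
  rw [← Fin.sum_succ_sub_castSucc, Finset.mul_sum]
  refine Finset.sum_le_sum fun i _ => ?_
  calc dist (q (s i.castSucc)) (q (s i.succ)) ≤ K * dist (s i.castSucc) (s i.succ) :=
        hq.dist_le_mul _ (hsA _) _ (hsA _)
    _ = K * (s i.succ - s i.castSucc) := by
        rw [Real.dist_eq, abs_sub_comm, abs_of_nonneg (sub_nonneg.2 (hs i.castSucc_le_succ))]

theorem LipschitzWith.ite_lt {K : NNReal} {f g : ℝ → α} (hf : LipschitzWith K f) (hg : LipschitzWith K g) {a : ℝ} (h : f a = g a) :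
    LipschitzWith K (fun t => if t < a then f t else g t) := by
  refine LipschitzWith.of_dist_le_mul fun s t => ?_
  wlog hst : s ≤ t generalizing s t
  · rw [dist_comm, dist_comm s]
    exact this t s (le_of_not_ge hst)
  by_cases hs : s < a <;> by_cases ht : t < a <;> simp only [hs, ht, if_true, if_false]
  · exact hf.dist_le_mul s t
  · calc dist (f s) (g t) ≤ dist (f s) (f a) + dist (g a) (g t) := h ▸ dist_triangle _ _ _
      _ ≤ K * dist s a + K * dist a t := add_le_add (hf.dist_le_mul s a) (hg.dist_le_mul a t)
      _ = K * dist s t := by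
        simp only [Real.dist_eq]
        rw [abs_of_neg (by linarith), abs_of_nonpos (by linarith), abs_of_nonpos (by linarith)]
        ring
  · exact absurd (hst.trans_lt ht) hs
  · exact hg.dist_le_mul s t

theorem LipschitzOnWith.exists_polygonLength_le {ι : Type*} {K : NNReal}
    {q : ℝ → α} {T : ℝ} (hT : 0 ≤ T) (hq : LipschitzOnWith K q (Icc 0 T)) (S : Finset ι)
    (D : ι → Set α) (hvisit : ∀ i ∈ S, ∃ t ∈ Icc 0 T, q t ∈ D i) :
    ∃ π : Fin S.card → ι, Function.Injective π ∧ (∀ k, π k ∈ S) ∧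
      ∃ x : Fin S.card → α, (∀ k, x k ∈ D (π k)) ∧
        polygonLength (Fin.cons (q 0) (Fin.snoc x (q T)) : Fin (S.card + 2) → α) ≤ K * T := by
  choose! t ht hqt using hvisit
  obtain ⟨π, hπ, hπS, htπ⟩ := S.exists_injective_monotone_comp t
  set s : Fin (S.card + 2) → ℝ := Fin.cons 0 (Fin.snoc (t ∘ π) T)
  have hs : Monotone s := by
    refine (htπ.fin_snoc fun k => (ht _ (hπS k)).2).fin_cons fun i => ?_
    cases i using Fin.lastCases with
    | last => simpa using hT
    | cast k => simpa using (ht _ (hπS k)).1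
  have hs0 : s 0 = 0 := rfl
  have hsT : s (Fin.last _) = T := by simp [s, ← Fin.succ_last]
  have hsA : ∀ i, s i ∈ Icc 0 T := fun i =>
    ⟨hs0 ▸ hs (Fin.zero_le i), hsT ▸ hs (Fin.le_last i)⟩
  refine ⟨π, hπ, hπS, q ∘ t ∘ π, fun k => hqt _ (hπS k), ?_⟩
  simpa [s, hs0, hsT, Fin.comp_cons, Fin.comp_snoc] using hq.polygonLength_comp_le hs hsA

end Polygon

section NormedSpace

variable {E : Type*} [NormedAddCommGroup E] [NormedSpace ℝ E]

theorem exists_lipschitzWith_one_segment (z₀ z₁ : E) :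
    ∃ γ : ℝ → E, LipschitzWith 1 γ ∧ (∀ t ≤ 0, γ t = z₀) ∧ ∀ t, dist z₀ z₁ ≤ t → γ t = z₁ := by
  rcases eq_or_ne z₀ z₁ with rfl | hne
  · exact ⟨fun _ => z₀, LipschitzWith.const' _, fun _ _ => rfl, fun _ _ => rfl⟩
  set d := dist z₀ z₁
  have hd : 0 < d := dist_pos.2 hne
  refine ⟨fun t => lineMap z₀ z₁ (projIcc 0 1 zero_le_one (t / d) : ℝ), ?_, fun t ht => ?_,
    fun t ht => ?_⟩
  · refine LipschitzWith.of_dist_le_mul fun s t => ?_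
    rw [dist_lineMap_lineMap, NNReal.coe_one, one_mul]
    calc _ ≤ dist (s / d) (t / d) * d := by
          gcongr
          have := (LipschitzWith.projIcc zero_le_one).dist_le_mul (s / d) (t / d)
          rwa [NNReal.coe_one, one_mul] at this
      _ = dist s t := by
          rw [Real.dist_eq, Real.dist_eq, ← sub_div, abs_div, abs_of_pos hd,
            div_mul_cancel₀ _ hd.ne']
  · simp [projIcc_of_le_left _ (div_nonpos_of_nonpos_of_nonneg ht hd.le)]
  · simp [projIcc_of_right_le _ ((one_le_div hd).2 ht)]

theorem exists_lipschitzWith_one_polygon :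
    ∀ {n : ℕ} (y : Fin (n + 1) → E), ∃ γ : ℝ → E, LipschitzWith 1 γ ∧ (∀ t ≤ 0, γ t = y 0) ∧
      (∀ t, polygonLength y ≤ t → γ t = y (Fin.last n)) ∧
      ∀ k, y k ∈ γ '' Icc 0 (polygonLength y)
  | 0, y => ⟨fun _ => y 0, LipschitzWith.const' _, fun _ _ => rfl, fun _ _ => rfl,
      fun k => ⟨0, by simp [polygonLength], by simp [Fin.fin_one_eq_zero k]⟩⟩
  | n + 1, y => by
    obtain ⟨σ, hσ, hσ0, hσ1⟩ := exists_lipschitzWith_one_segment (y 0) (y 1)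
    obtain ⟨γ, hγ, hγ0, hγL, hγy⟩ := exists_lipschitzWith_one_polygon (Fin.tail y)
    set d := dist (y 0) (y 1)
    have hd : 0 ≤ d := dist_nonneg
    have hL := polygonLength_eq_dist_add_tail y
    have hstart : ∀ t ≤ 0, (if t < d then σ t else γ (t - d)) = y 0 := by
      intro t ht
      split_ifs with htd
      · exact hσ0 t ht
      · have hd0 : d = 0 := by linarith
        rw [show t - d = 0 by linarith, hγ0 0 le_rfl, Fin.tail, dist_eq_zero.1 hd0]
        rfl
    refine ⟨fun t => if t < d then σ t else γ (t - d), ?_, hstart, fun t ht => ?_, fun k => ?_⟩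
    · have hγd : LipschitzWith 1 fun t => γ (t - d) :=
        (mul_one (1 : NNReal)) ▸ hγ.comp (IsometryEquiv.subRight d).isometry.lipschitz
      refine hσ.ite_lt hγd ?_
      simp [hσ1 d le_rfl, hγ0 0 le_rfl, Fin.tail]
    · have hLt := polygonLength_nonneg (Fin.tail y)
      simp only [if_neg (show ¬ t < d by linarith), hγL (t - d) (by linarith), Fin.tail,
        Fin.succ_last]
    · cases k using Fin.cases with
      | zero => exact ⟨0, ⟨le_rfl, polygonLength_nonneg y⟩, hstart 0 le_rfl⟩
      | succ j =>
        obtain ⟨τ, ⟨hτ0, hτL⟩, hτ⟩ := hγy j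
        refine ⟨τ + d, ⟨by linarith, by linarith⟩, ?_⟩
        simp only [if_neg (show ¬ τ + d < d by linarith), add_sub_cancel_right, hτ, Fin.tail]

theorem exists_lipschitzWith_of_polygonLength_le {n : ℕ} (y : Fin (n + 1) → E) {V T : ℝ}
    (hV : 0 < V) (hy : polygonLength y ≤ V * T) :
    ∃ q : ℝ → E, LipschitzWith ⟨V, hV.le⟩ q ∧ q 0 = y 0 ∧ q T = y (Fin.last n) ∧
      ∀ k, y k ∈ q '' Icc 0 T := by
  obtain ⟨γ, hγ, hγ0, hγL, hγy⟩ := exists_lipschitzWith_one_polygon y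
  refine ⟨fun t => γ (V * t), LipschitzWith.of_dist_le_mul fun s t => ?_, hγ0 _ (by simp),
    hγL _ hy, fun k => ?_⟩
  · calc dist (γ (V * s)) (γ (V * t)) ≤ dist (V * s) (V * t) := by
          simpa using hγ.dist_le_mul (V * s) (V * t)
      _ = V * dist s t := by rw [Real.dist_eq, Real.dist_eq, ← mul_sub, abs_mul, abs_of_pos hV]
  · obtain ⟨τ, ⟨hτ0, hτL⟩, hτ⟩ := hγy k
    refine ⟨τ / V, ⟨div_nonneg hτ0 hV.le, (div_le_iff₀' hV).2 (hτL.trans hy)⟩, ?_⟩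
    simp only [mul_div_cancel₀ _ hV.ne', hτ]

end NormedSpace

theorem P1_iff_P2_general
    (N : ℕ) (w : Fin N → EuclideanSpace ℝ (Fin 2)) (r : Fin N → ℝ)
    (T Vmax : ℝ) (hT : 0 < T) (hV : 0 < Vmax)
    (q0 qF : EuclideanSpace ℝ (Fin 2))
    (S : Finset (Fin N)) :
    (∃ q : ℝ → EuclideanSpace ℝ (Fin 2),
        (∀ s ∈ Set.Icc (0:ℝ) T, ∀ t ∈ Set.Icc (0:ℝ) T,
          dist (q s) (q t) ≤ Vmax * |s - t|) ∧
        q 0 = q0 ∧ q T = qF ∧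
        ∀ n ∈ S, ∃ t ∈ Set.Icc (0:ℝ) T, dist (q t) (w n) ≤ r n)
    ↔ (∃ π : Fin S.card → Fin N, Function.Injective π ∧ (∀ k, π k ∈ S) ∧
        ∃ x : Fin S.card → EuclideanSpace ℝ (Fin 2),
          (∀ k, dist (x k) (w (π k)) ≤ r (π k)) ∧
          ∑ i : Fin (S.card + 1),
            dist ((Fin.cons q0 (Fin.snoc x qF) : Fin (S.card + 2) → EuclideanSpace ℝ (Fin 2)) i.castSucc)
                 ((Fin.cons q0 (Fin.snoc x qF) : Fin (S.card + 2) → EuclideanSpace ℝ (Fin 2)) i.succ) ≤ Vmax * T) := by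
  constructor
  · rintro ⟨q, hq, rfl, rfl, hvisit⟩
    have hLip : LipschitzOnWith ⟨Vmax, hV.le⟩ q (Icc 0 T) :=
      LipschitzOnWith.of_dist_le_mul fun s hs t ht => by rw [Real.dist_eq]; exact hq s hs t ht
    exact hLip.exists_polygonLength_le hT.le S (fun n => Metric.closedBall (w n) (r n)) hvisit
  · rintro ⟨π, hπ, hπS, x, hx, hlen⟩
    obtain ⟨q, hq, hq0, hqT, hqx⟩ := exists_lipschitzWith_of_polygonLength_le _ hV hlen
    refine ⟨q, fun s _ t _ => by rw [← Real.dist_eq]; exact hq.dist_le_mul s t, by simpa using hq0,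
      by simpa [← Fin.succ_last] using hqT, fun n hn => ?_⟩
    obtain ⟨k, rfl⟩ := S.exists_eq_of_injective_of_mem hπ hπS hn
    obtain ⟨t, ht, hqt⟩ := hqx k.castSucc.succ
    exact ⟨t, ht, by simpa [hqt] using hx k⟩

/-- Equivalence of problems (P1) and (P2): a subset `S` of sensor nodes can all be
visited by a feasible trajectory iff there is an ordering of `S` and one waypoint in
each coverage disk such that the polygonal path `q0 → x₁ → ⋯ → x_K → qF` has length
at most `Vmax * T`. -/
theorem P1_iff_P2
    (N : ℕ) (w : Fin N → EuclideanSpace ℝ (Fin 2)) (r : Fin N → ℝ)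
    (hr : ∀ n, 0 ≤ r n) (T Vmax : ℝ) (hT : 0 < T) (hV : 0 < Vmax)
    (q0 qF : EuclideanSpace ℝ (Fin 2)) (hfeas : ‖qF - q0‖ ≤ Vmax * T)
    (S : Finset (Fin N)) :
    (∃ q : ℝ → EuclideanSpace ℝ (Fin 2),
        (∀ s ∈ Set.Icc (0:ℝ) T, ∀ t ∈ Set.Icc (0:ℝ) T,
          dist (q s) (q t) ≤ Vmax * |s - t|) ∧
        q 0 = q0 ∧ q T = qF ∧
        ∀ n ∈ S, ∃ t ∈ Set.Icc (0:ℝ) T, dist (q t) (w n) ≤ r n)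
    ↔ (∃ π : Fin S.card → Fin N, Function.Injective π ∧ (∀ k, π k ∈ S) ∧
        ∃ x : Fin S.card → EuclideanSpace ℝ (Fin 2),
          (∀ k, dist (x k) (w (π k)) ≤ r (π k)) ∧
          ∑ i : Fin (S.card + 1),
            dist ((Fin.cons q0 (Fin.snoc x qF) : Fin (S.card + 2) → EuclideanSpace ℝ (Fin 2)) i.castSucc)
                 ((Fin.cons q0 (Fin.snoc x qF) : Fin (S.card + 2) → EuclideanSpace ℝ (Fin 2)) i.succ) ≤ Vmax * T) :=
  P1_iff_P2_general N w r T Vmax hT hV q0 qF S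
end
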